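/- arXiv:2506.12225 — 4 statements merged into one kernel-verified Lean document; each statement's English description precedes it below -/
import Mathlib

section
/- Let E be a Hausdorff topological real vector space and M ⊆ E a nonempty compact convex set. Let F : E → ℝ be continuous on M and convex on M, and let H : E → ℝ be continuous on M, strictly convex on M, and nonnegative on M. For each ε > 0 let μ_ε ∈ M be a minimizer of μ ↦ F(μ) + ε·H(μ) over M. Then there exists a unique μ* ∈ M such that: (i) μ_ε converges to μ* as ε ↓ 0 (i.e., along every sequence ε_n ↓ 0); (ii) μ* minimizes F over M; and (iii) μ* is the unique minimizer of H over the set argmin_{μ∈M} F(μ). -/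
/-!
Along any null sequence `εₙ`, every cluster point `m` of the penalized minimizers `xₙ` minimizes
`F`, because `F xₙ ≤ F y + εₙ H y` and `H ≥ 0`; and it minimizes `H` among the minimizers `y`
of `F`, because `F y ≤ F xₙ` forces `H xₙ ≤ H y`. The minimizers of the convex `F` form a convex
set, on which the strictly convex `H` has at most one minimizer, so all cluster points coincide
and compactness turns this into convergence.
-/

open Filter Topology

lemma ConvexOn.convex_setOf_isMinOn {𝕜 E β : Type*} [Semiring 𝕜] [PartialOrder 𝕜]
    [AddCommMonoid E] [AddCommMonoid β] [PartialOrder β] [IsOrderedAddMonoid β] [SMul 𝕜 E]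
    [Module 𝕜 β] [PosSMulMono 𝕜 β] {s : Set E} {f : E → β} (hf : ConvexOn 𝕜 s f) :
    Convex 𝕜 {x ∈ s | IsMinOn f s x} := by
  intro x hx y hy a b ha hb hab
  have hz := hf.convex_le (f x) ⟨hx.1, le_rfl⟩ ⟨hy.1, hy.2 hx.1⟩ ha hb hab
  exact ⟨hz.1, fun w hw => hz.2.trans (hx.2 hw)⟩

section PenalizedMinimizers

variable {ι E : Type*} [TopologicalSpace E] {M : Set E} {F H : E → ℝ} {l : Filter ι}
  {ε : ι → ℝ} {x : ι → E} {m : E}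

lemma isMinOn_of_tendsto_penalized [l.NeBot] (hF : ContinuousOn F M)
    (hH₀ : ∀ y ∈ M, 0 ≤ H y) (hε₀ : ∀ i, 0 < ε i) (hε : Tendsto ε l (𝓝 0))
    (hx : ∀ i, x i ∈ M) (hopt : ∀ i, ∀ y ∈ M, F (x i) + ε i * H (x i) ≤ F y + ε i * H y)
    (hm : m ∈ M) (hlim : Tendsto x l (𝓝 m)) : IsMinOn F M m := by
  intro y hy
  have hFx : Tendsto (fun i => F (x i)) l (𝓝 (F m)) :=
    (hF m hm).tendsto.comp (tendsto_nhdsWithin_iff.2 ⟨hlim, .of_forall hx⟩)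
  have hbound : Tendsto (fun i => F y + ε i * H y) l (𝓝 (F y)) := by
    simpa using tendsto_const_nhds.add (hε.mul_const (H y))
  refine le_of_tendsto_of_tendsto' hFx hbound fun i => ?_
  nlinarith [hopt i y hy, mul_nonneg (hε₀ i).le (hH₀ _ (hx i))]

lemma isMinOn_setOf_isMinOn_of_tendsto_penalized [l.NeBot] (hH : ContinuousOn H M)
    (hε₀ : ∀ i, 0 < ε i) (hx : ∀ i, x i ∈ M)
    (hopt : ∀ i, ∀ y ∈ M, F (x i) + ε i * H (x i) ≤ F y + ε i * H y)
    (hm : m ∈ M) (hlim : Tendsto x l (𝓝 m)) : IsMinOn H {y ∈ M | IsMinOn F M y} m := by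
  rintro y ⟨hy, hFy⟩
  have hHx : Tendsto (fun i => H (x i)) l (𝓝 (H m)) :=
    (hH m hm).tendsto.comp (tendsto_nhdsWithin_iff.2 ⟨hlim, .of_forall hx⟩)
  refine le_of_tendsto' hHx fun i => le_of_mul_le_mul_left ?_ (hε₀ i)
  have hFxy : F y ≤ F (x i) := hFy (hx i)
  linarith [hopt i y hy]

lemma isMinOn_of_mapClusterPt_penalized (hF : ContinuousOn F M) (hH : ContinuousOn H M)
    (hH₀ : ∀ y ∈ M, 0 ≤ H y) (hε₀ : ∀ i, 0 < ε i) (hε : Tendsto ε l (𝓝 0))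
    (hx : ∀ i, x i ∈ M) (hopt : ∀ i, ∀ y ∈ M, F (x i) + ε i * H (x i) ≤ F y + ε i * H y)
    (hm : m ∈ M) (hclust : MapClusterPt m l x) :
    IsMinOn F M m ∧ IsMinOn H {y ∈ M | IsMinOn F M y} m := by
  obtain ⟨U, hUl, hlim⟩ := mapClusterPt_iff_ultrafilter.1 hclust
  exact ⟨isMinOn_of_tendsto_penalized hF hH₀ hε₀ (hε.mono_left hUl) hx hopt hm hlim,
    isMinOn_setOf_isMinOn_of_tendsto_penalized hH hε₀ hx hopt hm hlim⟩

end PenalizedMinimizers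

theorem penalized_expost_bayes_limit_general
    {E : Type*} [AddCommGroup E] [Module ℝ E] [TopologicalSpace E]
    (M : Set E) (hMcomp : IsCompact M)
    (F H : E → ℝ)
    (hFcont : ContinuousOn F M) (hFconv : ConvexOn ℝ M F)
    (hHcont : ContinuousOn H M) (hHconv : StrictConvexOn ℝ M H)
    (hHnonneg : ∀ m ∈ M, 0 ≤ H m)
    (μ : ℝ → E)
    (hμmem : ∀ ε : ℝ, 0 < ε → μ ε ∈ M)
    (hμopt : ∀ ε : ℝ, 0 < ε → ∀ m ∈ M, F (μ ε) + ε * H (μ ε) ≤ F m + ε * H m) :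
    ∃! μstar : E, μstar ∈ M ∧
      (∀ εs : ℕ → ℝ, (∀ n, 0 < εs n) → Filter.Tendsto εs Filter.atTop (nhds 0) →
        Filter.Tendsto (fun n => μ (εs n)) Filter.atTop (nhds μstar)) ∧
      (∀ m ∈ M, F μstar ≤ F m) ∧
      (∀ m ∈ M, (∀ m' ∈ M, F m ≤ F m') → H μstar ≤ H m) ∧
      (∀ m ∈ M, (∀ m' ∈ M, F m ≤ F m') → H m ≤ H μstar → m = μstar) := by
  set S := {y ∈ M | IsMinOn F M y}
  have hHS : StrictConvexOn ℝ S H := hHconv.subset (fun _ hy => hy.1) hFconv.convex_setOf_isMinOn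
  have cluster : ∀ εs : ℕ → ℝ, (∀ n, 0 < εs n) → Tendsto εs atTop (𝓝 0) → ∀ m ∈ M,
      MapClusterPt m atTop (fun n => μ (εs n)) → IsMinOn F M m ∧ IsMinOn H S m :=
    fun εs hpos hεs m hm => isMinOn_of_mapClusterPt_penalized hFcont hHcont hHnonneg hpos hεs
      (fun n => hμmem _ (hpos n)) (fun n => hμopt _ (hpos n)) hm
  have hpos₀ (n : ℕ) : 0 < 1 / ((n : ℝ) + 1) := Nat.one_div_pos_of_nat
  obtain ⟨μstar, hμstar, hclust⟩ := hMcomp.exists_mapClusterPt (f := atTop)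
    (tendsto_principal.2 (.of_forall fun n => hμmem _ (hpos₀ n)))
  obtain ⟨hFmin, hHmin⟩ :=
    cluster _ hpos₀ tendsto_one_div_add_atTop_nhds_zero_nat μstar hμstar hclust
  refine ⟨μstar, ⟨hμstar, fun εs hpos hεs => ?_, hFmin, fun m hm hmF => hHmin ⟨hm, hmF⟩,
    fun m hm hmF hmH =>
      hHS.eq_of_isMinOn (fun _ hz => hmH.trans (hHmin hz)) hHmin ⟨hm, hmF⟩ ⟨hμstar, hFmin⟩⟩, ?_⟩
  · refine hMcomp.tendsto_nhds_of_unique_mapClusterPt (.of_forall fun n => hμmem _ (hpos n))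
      fun m hm hm_clust => ?_
    obtain ⟨hmF, hmH⟩ := cluster εs hpos hεs m hm hm_clust
    exact hHS.eq_of_isMinOn hmH hHmin ⟨hm, hmF⟩ ⟨hμstar, hFmin⟩
  · rintro y ⟨hy, -, hyF, hyH, -⟩
    exact hHS.eq_of_isMinOn (fun z hz => hyH z hz.1 hz.2) hHmin ⟨hy, hyF⟩ ⟨hμstar, hFmin⟩

/-- Convergence of penalized minimizers: on a nonempty compact convex subset `M` of a
Hausdorff topological real vector space, with `F` continuous and convex on `M` and `H`
continuous, strictly convex and nonnegative on `M`, if `μ ε` minimizes `F + ε • H` over `M`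
for each `ε > 0`, then there is a unique `μ*` in `M` such that `μ ε → μ*` as `ε ↓ 0`
(along every positive sequence tending to zero), `μ*` minimizes `F` over `M`, and `μ*` is
the unique minimizer of `H` over the set of minimizers of `F` on `M`. -/
theorem penalized_expost_bayes_limit
    {E : Type*} [AddCommGroup E] [Module ℝ E] [TopologicalSpace E] [T2Space E]
    [IsTopologicalAddGroup E] [ContinuousSMul ℝ E]
    (M : Set E) (hMne : M.Nonempty) (hMcomp : IsCompact M) (hMconv : Convex ℝ M)
    (F H : E → ℝ)
    (hFcont : ContinuousOn F M) (hFconv : ConvexOn ℝ M F)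
    (hHcont : ContinuousOn H M) (hHconv : StrictConvexOn ℝ M H)
    (hHnonneg : ∀ m ∈ M, 0 ≤ H m)
    (μ : ℝ → E)
    (hμmem : ∀ ε : ℝ, 0 < ε → μ ε ∈ M)
    (hμopt : ∀ ε : ℝ, 0 < ε → ∀ m ∈ M, F (μ ε) + ε * H (μ ε) ≤ F m + ε * H m) :
    ∃! μstar : E, μstar ∈ M ∧
      (∀ εs : ℕ → ℝ, (∀ n, 0 < εs n) → Filter.Tendsto εs Filter.atTop (nhds 0) →
        Filter.Tendsto (fun n => μ (εs n)) Filter.atTop (nhds μstar)) ∧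
      (∀ m ∈ M, F μstar ≤ F m) ∧
      (∀ m ∈ M, (∀ m' ∈ M, F m ≤ F m') → H μstar ≤ H m) ∧
      (∀ m ∈ M, (∀ m' ∈ M, F m ≤ F m') → H m ≤ H μstar → m = μstar) :=
  penalized_expost_bayes_limit_general M hMcomp F H hFcont hFconv hHcont hHconv hHnonneg μ hμmem
    hμopt
end

section
/- Let E be a Hausdorff topological real vector space, M ⊆ E a nonempty compact convex set, and H : E → ℝ continuous on M and strictly convex on M. Let (Q_n) be a decreasing sequence (Q_n ⊇ Q_{n+1}) of nonempty closed convex subsets of M, and let Q := ⋂_n Q_n (which is nonempty by compactness). Let μ_n be the unique minimizer of H over Q_n and μ* the unique minimizer of H over Q. Then μ_n → μ* in E and H(μ_n) → H(μ*). -/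
/-!
Every cluster point `a` of `μn` lies in each closed set `Q n` (the tail of the sequence does)
and, by continuity of `H` on `M`, satisfies `H a ≤ H μstar`, since `H (μn n) ≤ H μstar` for
all `n`. So `a` is also a minimizer of `H` on `⋂ n, Q n`, and strict convexity forces `a = μstar`.
In the compact set `M` a sequence with a unique cluster point converges to it; the values
converge by continuity of `H` within `M`.
-/

open Filter Topology Set

theorem MapClusterPt.continuousWithinAt_comp {X Y α : Type*} [TopologicalSpace X]
    [TopologicalSpace Y] {f : X → Y} {s : Set X} {x : X} {F : Filter α} {u : α → X}
    (hf : ContinuousWithinAt f s x) (hus : ∀ᶠ n in F, u n ∈ s) (hu : MapClusterPt x F u) :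
    MapClusterPt (f x) F (f ∘ u) :=
  hu.tendsto_comp' <| hf.mono_left <| le_inf inf_le_left <|
    inf_le_right.trans <| le_principal_iff.mpr hus

theorem mem_iInter_of_mapClusterPt_of_antitone {X ι : Type*} [TopologicalSpace X] [Preorder ι]
    {Q : ι → Set X} (hQ : Antitone Q) (hclosed : ∀ i, IsClosed (Q i)) {u : ι → X}
    (hu : ∀ i, u i ∈ Q i) {a : X} (ha : MapClusterPt a atTop u) : a ∈ ⋂ i, Q i :=
  mem_iInter.mpr fun i => (hclosed i).mem_of_mapClusterPt ha <|
    (eventually_ge_atTop i).mono fun _ hj => hQ hj (hu _)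

theorem minimizers_converge_along_decreasing_sets_general
    {E : Type*} [AddCommGroup E] [Module ℝ E] [TopologicalSpace E]
    (M : Set E) (hMcomp : IsCompact M)
    (H : E → ℝ) (hHcont : ContinuousOn H M) (hHconv : StrictConvexOn ℝ M H)
    (Q : ℕ → Set E) (hQsub : ∀ n, Q n ⊆ M)
    (hQclosed : ∀ n, IsClosed (Q n)) (hQconv : ∀ n, Convex ℝ (Q n))
    (hQdec : ∀ n, Q (n + 1) ⊆ Q n)
    (μn : ℕ → E) (hμnmem : ∀ n, μn n ∈ Q n)
    (hμnopt : ∀ n, ∀ m ∈ Q n, H (μn n) ≤ H m)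
    (μstar : E) (hμstarmem : μstar ∈ ⋂ n, Q n)
    (hμstaropt : ∀ m ∈ ⋂ n, Q n, H μstar ≤ H m) :
    Filter.Tendsto μn Filter.atTop (nhds μstar) ∧
      Filter.Tendsto (fun n => H (μn n)) Filter.atTop (nhds (H μstar)) := by
  have hInterM : (⋂ n, Q n) ⊆ M := (iInter_subset Q 0).trans (hQsub 0)
  have hμnM : ∀ᶠ n in atTop, μn n ∈ M := Eventually.of_forall fun n => hQsub n (hμnmem n)
  have hconvInter : StrictConvexOn ℝ (⋂ n, Q n) H :=
    hHconv.subset hInterM (convex_iInter hQconv)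
  have hcluster : ∀ a ∈ M, MapClusterPt a atTop μn → a = μstar := by
    intro a haM ha
    have haQ : a ∈ ⋂ n, Q n :=
      mem_iInter_of_mapClusterPt_of_antitone (antitone_nat_of_succ_le hQdec) hQclosed hμnmem ha
    have hHa : H a ≤ H μstar := isClosed_Iic.mem_of_mapClusterPt
      (ha.continuousWithinAt_comp (hHcont a haM) hμnM)
      (Eventually.of_forall fun n => hμnopt n μstar (mem_iInter.mp hμstarmem n))
    exact hconvInter.eq_of_isMinOn (isMinOn_iff.mpr fun m hm => hHa.trans (hμstaropt m hm))
      (isMinOn_iff.mpr hμstaropt) haQ hμstarmem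
  have hlim : Tendsto μn atTop (𝓝 μstar) :=
    hMcomp.tendsto_nhds_of_unique_mapClusterPt hμnM hcluster
  exact ⟨hlim, (hHcont μstar (hInterM hμstarmem)).tendsto.comp
    (tendsto_nhdsWithin_iff.mpr ⟨hlim, hμnM⟩)⟩

/-- Stability of minimizers of a continuous strictly convex function along a decreasing
sequence of nonempty closed convex subsets of a compact convex set: the minimizers over
`Q n` converge to the minimizer over `⋂ n, Q n`, and the minimum values converge as well. -/
theorem minimizers_converge_along_decreasing_sets
    {E : Type*} [AddCommGroup E] [Module ℝ E] [TopologicalSpace E] [T2Space E]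
    [IsTopologicalAddGroup E] [ContinuousSMul ℝ E]
    (M : Set E) (hMne : M.Nonempty) (hMcomp : IsCompact M) (hMconv : Convex ℝ M)
    (H : E → ℝ) (hHcont : ContinuousOn H M) (hHconv : StrictConvexOn ℝ M H)
    (Q : ℕ → Set E) (hQsub : ∀ n, Q n ⊆ M) (hQne : ∀ n, (Q n).Nonempty)
    (hQclosed : ∀ n, IsClosed (Q n)) (hQconv : ∀ n, Convex ℝ (Q n))
    (hQdec : ∀ n, Q (n + 1) ⊆ Q n)
    (μn : ℕ → E) (hμnmem : ∀ n, μn n ∈ Q n)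
    (hμnopt : ∀ n, ∀ m ∈ Q n, H (μn n) ≤ H m)
    (μstar : E) (hμstarmem : μstar ∈ ⋂ n, Q n)
    (hμstaropt : ∀ m ∈ ⋂ n, Q n, H μstar ≤ H m) :
    Filter.Tendsto μn Filter.atTop (nhds μstar) ∧
      Filter.Tendsto (fun n => H (μn n)) Filter.atTop (nhds (H μstar)) :=
  minimizers_converge_along_decreasing_sets_general M hMcomp H hHcont hHconv Q hQsub hQclosed hQconv
    hQdec μn hμnmem hμnopt μstar hμstarmem hμstaropt
end

section
/- Let (Y, d) be a compact metric space, Θ ⊆ ℝ^k open, and θ₀ ∈ Θ. Let w : Θ × Y → ℝ be such that w(θ,·) is continuous on Y for each θ ∈ Θ, and suppose there is ẇ : Y × ℝ^k → ℝ with ẇ(·,h) continuous on Y for each h, satisfying the uniform directional-differentiability condition: for every h ∈ ℝ^k and all sequences t_n ↓ 0 and h_n → h with θ₀ + t_n h_n ∈ Θ for all n, sup_{y∈Y} | ( w(θ₀ + t_n h_n, y) − w(θ₀, y) ) / t_n − ẇ(y, h) | → 0. Let S be a nonempty closed set of Borel probability measures on Y (in the topology of weak convergence), define W_S*(θ) :=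 sup_{μ∈S} ∫_Y w(θ, y) dμ(y), and for ε > 0 define S^ε(θ₀) := { μ ∈ S : ∫ w(θ₀, y) dμ + ε ≥ W_S*(θ₀) }. Then for every h ∈ ℝ^k, the limit D(h) := lim_{ε↓0} sup_{μ ∈ S^ε(θ₀)} ∫_Y ẇ(y, h) dμ(y) exists, and W_S* is Hadamard directionally differentiable at θ₀ with directional derivative D: for all sequences t_n ↓ 0 and h_n → h with θ₀ + t_n h_n ∈ Θ, ( W_S*(θ₀ + t_n h_n) − W_S*(θ₀) ) / t_n → D(h). -/
/-!
Uniformly in `μ`, `∫ w(θ₀ + t hₙ) dμ = ∫ w(θ₀) dμ + t ∫ ẇ(·, h) dμ + o(t)`, so the argument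
is a Danskin-type sandwich for suprema of functionals `F₀ + t G + o(t)` over an arbitrary set.
A near-maximiser of `G` on the `t²`-argmax set of `F₀` bounds the difference quotient from
below by `sup_{S^{t²}} G - O(t) - o(1)`; a `t²`-maximiser of the perturbed functional lies in
the `O(t)`-argmax set of `F₀`, which bounds it from above by `sup_{S^{O(t)}} G + o(1)`. Both
bounds tend to `lim_{ε ↓ 0} sup_{S^ε} G`, which exists because `ε ↦ sup_{S^ε} G` is monotone
and bounded.
-/

open MeasureTheory Set Filter Topology

noncomputable def valueSup {Y : Type*} [MeasurableSpace Y]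
    (S : Set (ProbabilityMeasure Y)) (f : Y → ℝ) : ℝ :=
  sSup ((fun μ : ProbabilityMeasure Y => ∫ y, f y ∂(μ : Measure Y)) '' S)

lemma abs_sub_le_mul_add_of_abs_sub_sub_mul_le {a b g t e M : ℝ} (ht : 0 ≤ t) (hg : |g| ≤ M)
    (h : |a - b - t * g| ≤ t * e) : |a - b| ≤ t * (M + e) :=
  calc |a - b| = |(a - b - t * g) + t * g| := by rw [sub_add_cancel]
    _ ≤ |a - b - t * g| + |t * g| := abs_add_le _ _
    _ ≤ t * e + t * M := by rw [abs_mul, abs_of_nonneg ht]; gcongr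
    _ = t * (M + e) := by ring

lemma abs_sub_sub_mul_le_of_abs_div_sub_le {a b c t e : ℝ} (ht : 0 < t)
    (h : |(a - b) / t - c| ≤ e) : |a - b - t * c| ≤ t * e := by
  have hfactor : a - b - t * c = t * ((a - b) / t - c) := by field_simp
  rw [hfactor, abs_mul, abs_of_pos ht]
  gcongr

section NearArgmax

variable {α : Type*} {S T : Set α} {F F₀ G : α → ℝ} {c t e M ε : ℝ}

/-- The paper's `S^ε(θ₀)` is `nearArgmax S (fun μ ↦ ∫ w(θ₀, ·) dμ) ε`. -/
def nearArgmax (S : Set α) (F : α → ℝ) (ε : ℝ) : Set α :=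
  {x ∈ S | sSup (F '' S) ≤ F x + ε}

lemma bddAbove_image_of_forall_abs_le (hG : ∀ x ∈ T, |G x| ≤ M) : BddAbove (G '' T) :=
  ⟨M, by rintro _ ⟨x, hx, rfl⟩; exact (abs_le.mp (hG x hx)).2⟩

lemma bddAbove_image_of_le_add (hF₀ : BddAbove (F₀ '' S)) (h : ∀ x ∈ S, F x ≤ F₀ x + c) :
    BddAbove (F '' S) := by
  obtain ⟨B, hB⟩ := hF₀
  refine ⟨B + c, ?_⟩
  rintro _ ⟨x, hx, rfl⟩
  exact (h x hx).trans (by gcongr; exact hB (mem_image_of_mem F₀ hx))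

lemma sSup_image_le_sSup_image_add (hS : S.Nonempty) (hF₀ : BddAbove (F₀ '' S))
    (h : ∀ x ∈ S, F x ≤ F₀ x + c) : sSup (F '' S) ≤ sSup (F₀ '' S) + c :=
  csSup_le (hS.image F) <| by
    rintro _ ⟨x, hx, rfl⟩
    exact (h x hx).trans (by gcongr; exact le_csSup hF₀ (mem_image_of_mem F₀ hx))

lemma nearArgmax_nonempty (hS : S.Nonempty) (hε : 0 < ε) :
    (nearArgmax S F ε).Nonempty := by
  obtain ⟨_, ⟨x, hx, rfl⟩, hlt⟩ := exists_lt_of_lt_csSup (hS.image F) (sub_lt_self _ hε)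
  exact ⟨x, hx, by linarith⟩

lemma nearArgmax_mono : Monotone (nearArgmax S F) :=
  fun _ _ hle _ hx => ⟨hx.1, hx.2.trans (by gcongr)⟩

lemma exists_tendsto_sSup_image_nearArgmax (hS : S.Nonempty) (hG : ∀ x ∈ S, |G x| ≤ M) :
    ∃ L, Tendsto (fun ε => sSup (G '' nearArgmax S F ε)) (𝓝[>] 0) (𝓝 L) := by
  have hbdd : ∀ ε, BddAbove (G '' nearArgmax S F ε) :=
    fun _ => bddAbove_image_of_forall_abs_le fun x hx => hG x hx.1
  have hmono : MonotoneOn (fun ε => sSup (G '' nearArgmax S F ε)) (Ioi 0) :=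
    fun ε hε _ _ hle => csSup_le_csSup (hbdd _) ((nearArgmax_nonempty hS hε).image G)
      (image_mono (nearArgmax_mono hle))
  refine ⟨_, hmono.tendsto_nhdsGT ⟨-M, ?_⟩⟩
  rintro _ ⟨ε, hε, rfl⟩
  obtain ⟨x, hx⟩ := nearArgmax_nonempty hS hε
  exact (neg_le_of_abs_le (hG x hx.1)).trans (le_csSup (hbdd ε) (mem_image_of_mem G hx))

lemma sSup_image_nearArgmax_sub_le_div (hS : S.Nonempty) (hF₀ : BddAbove (F₀ '' S))
    (hG : ∀ x ∈ S, |G x| ≤ M) (ht : 0 < t) (hF : ∀ x ∈ S, |F x - F₀ x - t * G x| ≤ t * e) :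
    sSup (G '' nearArgmax S F₀ (t * t)) - 2 * t - e ≤ (sSup (F '' S) - sSup (F₀ '' S)) / t := by
  obtain ⟨_, ⟨x, hx, rfl⟩, hGx⟩ :=
    exists_lt_of_lt_csSup ((nearArgmax_nonempty (F := F₀) hS (mul_pos ht ht)).image G)
      (sub_lt_self _ ht)
  have hFbdd : BddAbove (F '' S) := bddAbove_image_of_le_add (c := t * (M + e)) hF₀ fun y hy =>
    by linarith [(abs_le.mp (abs_sub_le_mul_add_of_abs_sub_sub_mul_le ht.le (hG y hy) (hF y hy))).2]
  have hFx : F x ≤ sSup (F '' S) := le_csSup hFbdd (mem_image_of_mem F hx.1)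
  have hlin := (abs_le.mp (hF x hx.1)).1
  have htG := mul_lt_mul_of_pos_left hGx ht
  rw [le_div_iff₀ ht]
  linarith [hx.2]

lemma div_le_sSup_image_nearArgmax_add (hS : S.Nonempty) (hF₀ : BddAbove (F₀ '' S))
    (hG : ∀ x ∈ S, |G x| ≤ M) (ht : 0 < t) (hF : ∀ x ∈ S, |F x - F₀ x - t * G x| ≤ t * e) :
    (sSup (F '' S) - sSup (F₀ '' S)) / t ≤
      sSup (G '' nearArgmax S F₀ (t * (t + 2 * (M + e)))) + e + t := by
  have hclose : ∀ x ∈ S, |F x - F₀ x| ≤ t * (M + e) := fun x hx =>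
    abs_sub_le_mul_add_of_abs_sub_sub_mul_le ht.le (hG x hx) (hF x hx)
  have hFbdd : BddAbove (F '' S) := bddAbove_image_of_le_add (c := t * (M + e)) hF₀ fun x hx =>
    by linarith [(abs_le.mp (hclose x hx)).2]
  have hV₀ : sSup (F₀ '' S) ≤ sSup (F '' S) + t * (M + e) :=
    sSup_image_le_sSup_image_add hS hFbdd fun x hx => by linarith [(abs_le.mp (hclose x hx)).1]
  obtain ⟨_, ⟨x, hx, rfl⟩, hFx⟩ :=
    exists_lt_of_lt_csSup (hS.image F) (sub_lt_self _ (mul_pos ht ht))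
  have hlin := abs_le.mp (hF x hx)
  have htG := mul_le_mul_of_nonneg_left (abs_le.mp (hG x hx)).2 ht.le
  have hmem : x ∈ nearArgmax S F₀ (t * (t + 2 * (M + e))) := ⟨hx, by nlinarith⟩
  have hGx : G x ≤ sSup (G '' nearArgmax S F₀ (t * (t + 2 * (M + e)))) :=
    le_csSup (bddAbove_image_of_forall_abs_le fun y hy => hG y hy.1) (mem_image_of_mem G hmem)
  have hF₀x : F₀ x ≤ sSup (F₀ '' S) := le_csSup hF₀ (mem_image_of_mem F₀ hx)
  have htGx := mul_le_mul_of_nonneg_left hGx ht.le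
  rw [div_le_iff₀ ht]
  linarith

theorem tendsto_div_sSup_image_sub_sSup_image (hS : S.Nonempty) (hF₀ : BddAbove (F₀ '' S))
    (hG : ∀ x ∈ S, |G x| ≤ M) {F : ℕ → α → ℝ} {t e : ℕ → ℝ} (ht : ∀ n, 0 < t n)
    (ht0 : Tendsto t atTop (𝓝 0)) (he : Tendsto e atTop (𝓝 0))
    (hF : ∀ n, ∀ x ∈ S, |F n x - F₀ x - t n * G x| ≤ t n * e n) {L : ℝ}
    (hL : Tendsto (fun ε => sSup (G '' nearArgmax S F₀ ε)) (𝓝[>] 0) (𝓝 L)) :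
    Tendsto (fun n => (sSup (F n '' S) - sSup (F₀ '' S)) / t n) atTop (𝓝 L) := by
  obtain ⟨x, hx⟩ := hS
  have hM : 0 ≤ M := (abs_nonneg _).trans (hG x hx)
  have he0 (n : ℕ) : 0 ≤ e n :=
    nonneg_of_mul_nonneg_right ((abs_nonneg _).trans (hF n x hx)) (ht n)
  have hsq : Tendsto (fun n => t n * t n) atTop (𝓝[>] 0) :=
    tendsto_nhdsWithin_iff.2
      ⟨by simpa using ht0.mul ht0, .of_forall fun n => mul_pos (ht n) (ht n)⟩
  have hε : Tendsto (fun n => t n * (t n + 2 * (M + e n))) atTop (𝓝[>] 0) :=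
    tendsto_nhdsWithin_iff.2 ⟨by simpa using ht0.mul (ht0.add ((he.const_add M).const_mul 2)),
      .of_forall fun n => mul_pos (ht n) (by linarith [ht n, he0 n])⟩
  have hlower : Tendsto (fun n => sSup (G '' nearArgmax S F₀ (t n * t n)) - 2 * t n - e n)
      atTop (𝓝 L) := by
    simpa using ((hL.comp hsq).sub (ht0.const_mul 2)).sub he
  have hupper : Tendsto
      (fun n => sSup (G '' nearArgmax S F₀ (t n * (t n + 2 * (M + e n)))) + e n + t n)
      atTop (𝓝 L) := by
    simpa using ((hL.comp hε).add he).add ht0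
  exact tendsto_of_tendsto_of_tendsto_of_le_of_le hlower hupper
    (fun n => sSup_image_nearArgmax_sub_le_div ⟨x, hx⟩ hF₀ hG (ht n) (hF n))
    (fun n => div_le_sSup_image_nearArgmax_add ⟨x, hx⟩ hF₀ hG (ht n) (hF n))

end NearArgmax

section Integral

variable {Y : Type*} [MeasurableSpace Y]

lemma abs_integral_le_of_forall_abs_le (μ : Measure Y) [IsProbabilityMeasure μ] {f : Y → ℝ}
    {C : ℝ} (h : ∀ y, |f y| ≤ C) : |∫ y, f y ∂μ| ≤ C := by
  simpa using norm_integral_le_of_norm_le_const (μ := μ) (f := f)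
    (.of_forall fun y => by simpa using h y)

lemma abs_integral_sub_sub_mul_le (μ : Measure Y) [IsProbabilityMeasure μ] {f f₀ g : Y → ℝ}
    (hf : Integrable f μ) (hf₀ : Integrable f₀ μ) (hg : Integrable g μ) {t e : ℝ}
    (h : ∀ y, |f y - f₀ y - t * g y| ≤ e) :
    |∫ y, f y ∂μ - ∫ y, f₀ y ∂μ - t * ∫ y, g y ∂μ| ≤ e := by
  rw [← integral_const_mul, ← integral_sub hf hf₀,
    ← integral_sub (f := fun y => f y - f₀ y) (hf.sub hf₀) (hg.const_mul t)]
  exact abs_integral_le_of_forall_abs_le μ h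

variable [TopologicalSpace Y] [CompactSpace Y]

lemma exists_forall_abs_integral_le {f : Y → ℝ} (hf : Continuous f) :
    ∃ C, ∀ μ : ProbabilityMeasure Y, |∫ y, f y ∂(μ : Measure Y)| ≤ C := by
  obtain ⟨C, hC⟩ := isCompact_univ.exists_bound_of_continuousOn hf.continuousOn
  exact ⟨C, fun μ => abs_integral_le_of_forall_abs_le _ fun y => hC y (mem_univ y)⟩

lemma Continuous.integrable_of_compactSpace [OpensMeasurableSpace Y] {f : Y → ℝ}
    (hf : Continuous f) (μ : Measure Y) [IsFiniteMeasure μ] : Integrable f μ :=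
  hf.integrable_of_hasCompactSupport (.of_compactSpace f)

end Integral

theorem value_function_hadamard_directional_derivative_general
    {Y : Type*} [MetricSpace Y] [CompactSpace Y]
    [MeasurableSpace Y] [BorelSpace Y] {k : ℕ}
    (Θ : Set (Fin k → ℝ)) (θ₀ : Fin k → ℝ) (hθ₀ : θ₀ ∈ Θ)
    (w : (Fin k → ℝ) → Y → ℝ) (hw : ∀ θ ∈ Θ, Continuous (w θ))
    (wd : Y → (Fin k → ℝ) → ℝ) (hwd : ∀ h : Fin k → ℝ, Continuous fun y => wd y h)
    (hunif : ∀ (h : Fin k → ℝ) (t : ℕ → ℝ) (hs : ℕ → Fin k → ℝ),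
      (∀ n, 0 < t n) → Filter.Tendsto t Filter.atTop (nhds 0) →
      Filter.Tendsto hs Filter.atTop (nhds h) →
      (∀ n, θ₀ + t n • hs n ∈ Θ) →
      Filter.Tendsto
        (fun n => ⨆ y : Y, |(w (θ₀ + t n • hs n) y - w θ₀ y) / t n - wd y h|)
        Filter.atTop (nhds 0))
    (S : Set (ProbabilityMeasure Y)) (hSne : S.Nonempty) :
    ∃ D : (Fin k → ℝ) → ℝ,
      (∀ h : Fin k → ℝ,
        Filter.Tendsto
          (fun ε : ℝ => valueSup
            {μ ∈ S | valueSup S (w θ₀) ≤ ∫ y, w θ₀ y ∂(μ : Measure Y) + ε}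
            (fun y => wd y h))
          (nhdsWithin 0 (Set.Ioi 0)) (nhds (D h))) ∧
      (∀ (h : Fin k → ℝ) (t : ℕ → ℝ) (hs : ℕ → Fin k → ℝ),
        (∀ n, 0 < t n) → Filter.Tendsto t Filter.atTop (nhds 0) →
        Filter.Tendsto hs Filter.atTop (nhds h) →
        (∀ n, θ₀ + t n • hs n ∈ Θ) →
        Filter.Tendsto
          (fun n => (valueSup S (w (θ₀ + t n • hs n)) - valueSup S (w θ₀)) / t n)
          Filter.atTop (nhds (D h))) := by
  have hw₀ := hw θ₀ hθ₀
  obtain ⟨C, hC⟩ := exists_forall_abs_integral_le hw₀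
  have hF₀ : BddAbove ((fun μ : ProbabilityMeasure Y => ∫ y, w θ₀ y ∂(μ : Measure Y)) '' S) :=
    bddAbove_image_of_forall_abs_le fun μ _ => hC μ
  choose M hM using fun h => exists_forall_abs_integral_le (hwd h)
  choose D hD using fun h => exists_tendsto_sSup_image_nearArgmax hSne fun μ _ => hM h μ
  refine ⟨D, hD, fun h t hs ht ht0 hhs hmem => ?_⟩
  refine tendsto_div_sSup_image_sub_sSup_image hSne hF₀ (fun μ _ => hM h μ) ht ht0
    (hunif h t hs ht ht0 hhs hmem) (fun n μ _ => ?_) (hD h)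
  have hwn := hw _ (hmem n)
  refine abs_integral_sub_sub_mul_le _ (hwn.integrable_of_compactSpace _)
    (hw₀.integrable_of_compactSpace _) ((hwd h).integrable_of_compactSpace _) fun y => ?_
  refine abs_sub_sub_mul_le_of_abs_div_sub_le (ht n) (le_ciSup (f := fun y =>
    |(w (θ₀ + t n • hs n) y - w θ₀ y) / t n - wd y h|) ?_ y)
  exact (isCompact_range (by fun_prop)).bddAbove

/-- Hadamard directional differentiability of the value function
`W_S*(θ) = sup_{μ ∈ S} ∫ w(θ, ·) dμ` over a nonempty closed set `S` of Borel probability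
measures on a compact metric space `Y`: under uniform directional differentiability of
`w` at `θ₀` with derivative `ẇ`, the limit
`D(h) = lim_{ε ↓ 0} sup_{μ ∈ S^ε(θ₀)} ∫ ẇ(·, h) dμ` over the `ε`-argmax sets exists and
is the Hadamard directional derivative of `W_S*` at `θ₀`. -/
theorem value_function_hadamard_directional_derivative
    {Y : Type*} [MetricSpace Y] [CompactSpace Y] [Nonempty Y]
    [MeasurableSpace Y] [BorelSpace Y] {k : ℕ}
    (Θ : Set (Fin k → ℝ)) (hΘ : IsOpen Θ) (θ₀ : Fin k → ℝ) (hθ₀ : θ₀ ∈ Θ)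
    (w : (Fin k → ℝ) → Y → ℝ) (hw : ∀ θ ∈ Θ, Continuous (w θ))
    (wd : Y → (Fin k → ℝ) → ℝ) (hwd : ∀ h : Fin k → ℝ, Continuous fun y => wd y h)
    (hunif : ∀ (h : Fin k → ℝ) (t : ℕ → ℝ) (hs : ℕ → Fin k → ℝ),
      (∀ n, 0 < t n) → Filter.Tendsto t Filter.atTop (nhds 0) →
      Filter.Tendsto hs Filter.atTop (nhds h) →
      (∀ n, θ₀ + t n • hs n ∈ Θ) →
      Filter.Tendsto
        (fun n => ⨆ y : Y, |(w (θ₀ + t n • hs n) y - w θ₀ y) / t n - wd y h|)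
        Filter.atTop (nhds 0))
    (S : Set (ProbabilityMeasure Y)) (hSne : S.Nonempty) (hScl : IsClosed S) :
    ∃ D : (Fin k → ℝ) → ℝ,
      (∀ h : Fin k → ℝ,
        Filter.Tendsto
          (fun ε : ℝ => valueSup
            {μ ∈ S | valueSup S (w θ₀) ≤ ∫ y, w θ₀ y ∂(μ : Measure Y) + ε}
            (fun y => wd y h))
          (nhdsWithin 0 (Set.Ioi 0)) (nhds (D h))) ∧
      (∀ (h : Fin k → ℝ) (t : ℕ → ℝ) (hs : ℕ → Fin k → ℝ),
        (∀ n, 0 < t n) → Filter.Tendsto t Filter.atTop (nhds 0) →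
        Filter.Tendsto hs Filter.atTop (nhds h) →
        (∀ n, θ₀ + t n • hs n ∈ Θ) →
        Filter.Tendsto
          (fun n => (valueSup S (w (θ₀ + t n • hs n)) - valueSup S (w θ₀)) / t n)
          Filter.atTop (nhds (D h))) :=
  value_function_hadamard_directional_derivative_general Θ θ₀ hθ₀ w hw wd hwd hunif S hSne
end

section
/- In the setting of the Hadamard directional differentiability lemma — (Y,d) a compact metric space, Θ ⊆ ℝ^k open, θ₀ ∈ Θ, w : Θ × Y → ℝ with w(θ,·) continuous for each θ, ẇ : Y × ℝ^k → ℝ with ẇ(·,h) continuous for each h and satisfying: for every h and all sequences t_n ↓ 0, h_n → h with θ₀ + t_n h_n ∈ Θ, sup_{y∈Y} | ( w(θ₀+t_n h_n, y) − w(θ₀,y) ) / t_n − ẇ(y,h) | → 0, and S a nonempty closed set of Borel probability measures on Y — suppose in addition that ∫_Y w(θ₀, y) dμ(y) takes the same value for all μ ∈ S (as holds when S is contained in the set A₀ of welfare-maximizing couplings at θ₀). Then the Hadamard directional derivative of W_S*(θ) := sup_{μ∈S} ∫ w(θ,y) dμ at θ₀ in direction h equals sup_{μ∈S} ∫_Y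 ẇ(y,h) dμ(y). -/
open MeasureTheory

lemma abs_sSup_image_sub_sSup_image_le {ι : Type*} {S : Set ι} (hS : S.Nonempty)
    {f g : ι → ℝ} (hf : BddAbove (f '' S)) (hg : BddAbove (g '' S)) {ε : ℝ}
    (hfg : ∀ i ∈ S, |f i - g i| ≤ ε) :
    |sSup (f '' S) - sSup (g '' S)| ≤ ε := by
  rw [abs_sub_le_iff]
  constructor
  · rw [sub_le_iff_le_add]
    apply csSup_le (hS.image f)
    rintro x ⟨i, hi, rfl⟩
    have h1 : f i - g i ≤ ε := (abs_le.1 (hfg i hi)).2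
    have h2 : g i ≤ sSup (g '' S) := le_csSup hg ⟨i, hi, rfl⟩
    linarith
  · rw [sub_le_iff_le_add]
    apply csSup_le (hS.image g)
    rintro x ⟨i, hi, rfl⟩
    have h1 : -ε ≤ f i - g i := (abs_le.1 (hfg i hi)).1
    have h2 : f i ≤ sSup (f '' S) := le_csSup hf ⟨i, hi, rfl⟩
    linarith

lemma integrable_of_continuous_compact {Y : Type*} [MetricSpace Y] [CompactSpace Y]
    [MeasurableSpace Y] [BorelSpace Y] {f : Y → ℝ} (hf : Continuous f)
    (μ : Measure Y) [IsFiniteMeasure μ] : Integrable f μ :=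
  hf.integrable_of_hasCompactSupport (HasCompactSupport.of_compactSpace f)

lemma bddAbove_integral_image {Y : Type*} [MetricSpace Y] [CompactSpace Y] [Nonempty Y]
    [MeasurableSpace Y] [BorelSpace Y] {f : Y → ℝ} (hf : Continuous f)
    (S : Set (ProbabilityMeasure Y)) :
    BddAbove ((fun μ : ProbabilityMeasure Y => ∫ y, f y ∂(μ : Measure Y)) '' S) := by
  obtain ⟨M, hM⟩ := (isCompact_range (hf.norm)).bddAbove
  refine ⟨M, ?_⟩
  rintro x ⟨μ, hμ, rfl⟩
  calc ∫ y, f y ∂(μ : Measure Y) ≤ ‖∫ y, f y ∂(μ : Measure Y)‖ := le_abs_self _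
    _ ≤ M * ((μ : Measure Y) Set.univ).toReal :=
        norm_integral_le_of_norm_le_const (Filter.Eventually.of_forall fun y => hM ⟨y, rfl⟩)
    _ = M := by simp

/-- When `∫ w(θ₀, ·) dμ` takes the same value for all `μ ∈ S` (e.g. when `S` is contained
in the argmax set `A₀` of welfare-maximizing couplings at `θ₀`), the Hadamard directional
derivative of the value function `W_S*(θ) = sup_{μ ∈ S} ∫ w(θ, ·) dμ` at `θ₀` in
direction `h` equals `sup_{μ ∈ S} ∫ ẇ(·, h) dμ`. -/
theorem value_function_derivative_on_argmax
    {Y : Type*} [MetricSpace Y] [CompactSpace Y] [Nonempty Y]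
    [MeasurableSpace Y] [BorelSpace Y] {k : ℕ}
    (Θ : Set (Fin k → ℝ)) (hΘ : IsOpen Θ) (θ₀ : Fin k → ℝ) (hθ₀ : θ₀ ∈ Θ)
    (w : (Fin k → ℝ) → Y → ℝ) (hw : ∀ θ ∈ Θ, Continuous (w θ))
    (wd : Y → (Fin k → ℝ) → ℝ) (hwd : ∀ h : Fin k → ℝ, Continuous fun y => wd y h)
    (hunif : ∀ (h : Fin k → ℝ) (t : ℕ → ℝ) (hs : ℕ → Fin k → ℝ),
      (∀ n, 0 < t n) → Filter.Tendsto t Filter.atTop (nhds 0) →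
      Filter.Tendsto hs Filter.atTop (nhds h) →
      (∀ n, θ₀ + t n • hs n ∈ Θ) →
      Filter.Tendsto
        (fun n => ⨆ y : Y, |(w (θ₀ + t n • hs n) y - w θ₀ y) / t n - wd y h|)
        Filter.atTop (nhds 0))
    (S : Set (ProbabilityMeasure Y)) (hSne : S.Nonempty) (hScl : IsClosed S)
    (hconst : ∃ C : ℝ, ∀ μ ∈ S, ∫ y, w θ₀ y ∂(μ : Measure Y) = C) :
    ∀ (h : Fin k → ℝ) (t : ℕ → ℝ) (hs : ℕ → Fin k → ℝ),
      (∀ n, 0 < t n) → Filter.Tendsto t Filter.atTop (nhds 0) →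
      Filter.Tendsto hs Filter.atTop (nhds h) →
      (∀ n, θ₀ + t n • hs n ∈ Θ) →
      Filter.Tendsto
        (fun n => (valueSup S (w (θ₀ + t n • hs n)) - valueSup S (w θ₀)) / t n)
        Filter.atTop (nhds (valueSup S fun y => wd y h)) := by
  intro h t hs htpos htlim hslim hmem
  obtain ⟨C, hC⟩ := hconst
  set L : ℝ := valueSup S fun y => wd y h with hL
  -- valueSup at θ₀ equals C
  have hval0 : valueSup S (w θ₀) = C := by
    unfold valueSup
    have : (fun μ : ProbabilityMeasure Y => ∫ y, w θ₀ y ∂(μ : Measure Y)) '' S = {C} := by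
      apply Set.eq_singleton_iff_nonempty_unique_mem.2
      exact ⟨hSne.image _, by rintro x ⟨μ, hμ, rfl⟩; exact hC μ hμ⟩
    rw [this, csSup_singleton]
  have key : ∀ n, |(valueSup S (w (θ₀ + t n • hs n)) - valueSup S (w θ₀)) / t n - L|
      ≤ ⨆ y : Y, |(w (θ₀ + t n • hs n) y - w θ₀ y) / t n - wd y h| := by
    intro n
    set θn := θ₀ + t n • hs n with hθn
    have hwn : Continuous (w θn) := hw _ (hmem n)
    have hw0 : Continuous (w θ₀) := hw _ hθ₀
    have hwdh : Continuous fun y => wd y h := hwd h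
    set g : Y → ℝ := fun y => (w θn y - w θ₀ y) / t n with hg
    have hgc : Continuous g := ((hwn.sub hw0).div_const _)
    -- the difference quotient of the sup equals the sup of difference quotients of integrals
    have step1 : (valueSup S (w θn) - valueSup S (w θ₀)) / t n = valueSup S g := by
      rw [hval0]
      unfold valueSup
      have hmono : Monotone fun x : ℝ => (x - C) / t n := fun a b hab =>
        (div_le_div_iff_of_pos_right (htpos n)).2 (by linarith)
      have hcont : ContinuousAt (fun x : ℝ => (x - C) / t n)
          (sSup ((fun μ : ProbabilityMeasure Y => ∫ y, w θn y ∂(μ : Measure Y)) '' S)) :=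
        ((continuous_id.sub continuous_const).div_const _).continuousAt
      rw [hmono.map_csSup_of_continuousAt hcont (hSne.image _)
        (bddAbove_integral_image hwn S)]
      rw [← Set.image_comp]
      apply congrArg
      apply Set.image_congr
      intro μ hμ
      simp only [Function.comp]
      rw [← hC μ hμ]
      rw [← integral_sub (integrable_of_continuous_compact hwn _)
        (integrable_of_continuous_compact hw0 _), ← integral_div]
    rw [step1]
    -- bound on the difference of functions
    set ε : ℝ := ⨆ y : Y, |g y - wd y h| with hε
    have hbdd : BddAbove (Set.range fun y => |g y - wd y h|) :=
      (isCompact_range ((hgc.sub hwdh).abs)).bddAbove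
    have hptw : ∀ y : Y, |g y - wd y h| ≤ ε := fun y => le_ciSup hbdd y
    -- apply the sup-comparison lemma
    unfold valueSup
    apply abs_sSup_image_sub_sSup_image_le hSne (bddAbove_integral_image hgc S)
      (bddAbove_integral_image hwdh S)
    intro μ hμ
    rw [← integral_sub (integrable_of_continuous_compact hgc _)
      (integrable_of_continuous_compact hwdh _)]
    calc |∫ y, (g y - wd y h) ∂(μ : Measure Y)|
        = ‖∫ y, (g y - wd y h) ∂(μ : Measure Y)‖ := (Real.norm_eq_abs _).symm
      _ ≤ ε * ((μ : Measure Y) Set.univ).toReal :=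
          norm_integral_le_of_norm_le_const (Filter.Eventually.of_forall fun y => by
            rw [Real.norm_eq_abs]; exact hptw y)
      _ = ε := by simp
  -- conclude by squeeze
  have habs : Filter.Tendsto
      (fun n => |(valueSup S (w (θ₀ + t n • hs n)) - valueSup S (w θ₀)) / t n - L|)
      Filter.atTop (nhds 0) :=
    squeeze_zero (fun n => abs_nonneg _) key (hunif h t hs htpos htlim hslim hmem)
  have hsub : Filter.Tendsto
      (fun n => (valueSup S (w (θ₀ + t n • hs n)) - valueSup S (w θ₀)) / t n - L)
      Filter.atTop (nhds 0) := by
    rw [tendsto_zero_iff_norm_tendsto_zero]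
    simpa [Real.norm_eq_abs] using habs
  simpa using hsub.add_const L
end
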